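/- For every σ ≥ 1 there exists a constant C > 0 depending only on p and σ such that the following holds: for every σ-quasi-uniform partition of [a,b], every piecewise polynomial u^R = (P₀,…,P_N) of degree ≤ p with respect to it, every function u that is (p+1)-times continuously differentiable on [a,b], and every constant K ≥ 0, if ‖u − u^R‖_{L^∞(a,b)} ≤ K h^{p+1}, then all jumps in the k-th derivatives at the interior nodes satisfy |J_i^{(k)}| ≤ C (K + |u|_{W^{p+1}_∞}) h^{p+1−k} for all 1 ≤ i ≤ N and all 0 ≤ k ≤ p. (That is, optimal L^∞ convergence of order p+1 forces the jump of the k-th derivative to be of order h^{p+1−k}.) -/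

import Mathlib

/-!
Compare both pieces `P_{i-1}` and `P_i` with the degree-`p` Taylor polynomial `T` of `u` at
`x_{i-1}`: on the two cells adjacent to `x_i` the differences `P_{i-1} - T` and `P_i - T` are
bounded by `(K + 2^{p+1} |u|_{W^{p+1}_∞}) h^{p+1}`. A Markov-type inequality (on an interval of
length `L`, the `k`-th derivative of a polynomial of degree `≤ p` is at most `C_p L^{-k}` times its
sup norm, by interpolation at fixed nodes and scaling) then bounds their `k`-th derivatives at
`x_i`, and quasi-uniformity gives `L ≥ h / σ`. The jump is the difference of the two.
-/

open MeasureTheory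

noncomputable section

/-- Maximal mesh size `h` of the partition `x 0 < x 1 < ... < x (N+1)`. -/
def meshH (N : ℕ) (x : ℕ → ℝ) : ℝ :=
  (Finset.range (N + 1)).sup' (Finset.nonempty_range_iff.mpr (Nat.succ_ne_zero N))
    (fun i => x (i + 1) - x i)

/-- Minimal mesh size `h_min`. -/
def meshHmin (N : ℕ) (x : ℕ → ℝ) : ℝ :=
  (Finset.range (N + 1)).inf' (Finset.nonempty_range_iff.mpr (Nat.succ_ne_zero N))
    (fun i => x (i + 1) - x i)

/-- Jump of the `k`-th derivative of the piecewise polynomial `P` at the node `x i`. -/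
def jumpD (P : ℕ → Polynomial ℝ) (x : ℕ → ℝ) (i k : ℕ) : ℝ :=
  (Polynomial.derivative^[k] (P i)).eval (x i)
    - (Polynomial.derivative^[k] (P (i - 1))).eval (x i)

/-- `L^∞` distance between `u` and the piecewise polynomial `u^R` defined by `P`. -/
def distLinf (N : ℕ) (x : ℕ → ℝ) (P : ℕ → Polynomial ℝ) (u : ℝ → ℝ) : ℝ :=
  (Finset.range (N + 1)).sup' (Finset.nonempty_range_iff.mpr (Nat.succ_ne_zero N))
    (fun i => sSup ((fun t => |u t - (P i).eval t|) '' Set.Icc (x i) (x (i + 1))))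

/-- Sobolev seminorm `|u|_{W^{p+1}_∞}` on `[a,b]`. -/
def semiWinf (p : ℕ) (a b : ℝ) (u : ℝ → ℝ) : ℝ :=
  sSup ((fun t => |iteratedDerivWithin (p + 1) u (Set.Icc a b) t|) '' Set.Icc a b)

open Set

namespace Polynomial

theorem abs_eval_le_sum_abs_coeff {Q : ℝ[X]} {n : ℕ} (hQ : Q.natDegree < n) {t : ℝ}
    (ht : |t| ≤ 1) : |Q.eval t| ≤ ∑ m ∈ Finset.range n, |Q.coeff m| := by
  rw [eval_eq_sum_range' hQ]
  refine (Finset.abs_sum_le_sum_abs _ _).trans (Finset.sum_le_sum fun m _ => ?_)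
  rw [abs_mul, abs_pow]
  exact mul_le_of_le_one_right (abs_nonneg _) (pow_le_one₀ (abs_nonneg t) ht)

theorem iterate_derivative_comp_C_mul_X_add_C {R : Type*} [CommSemiring R] (Q : R[X]) (a b : R)
    (k : ℕ) : derivative^[k] (Q.comp (C a * X + C b))
      = C (a ^ k) * (derivative^[k] Q).comp (C a * X + C b) := by
  induction k with
  | zero => simp
  | succ k ih =>
    rw [Function.iterate_succ_apply', ih, derivative_C_mul, derivative_comp,
      Function.iterate_succ_apply']
    simp only [derivative_add, derivative_C_mul_X, derivative_C, add_zero, pow_succ, C_mul]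
    ring

def unitNodes (p : ℕ) (j : Fin (p + 1)) : ℝ := j / (p + 1)

theorem unitNodes_injective (p : ℕ) : Function.Injective (unitNodes p) := by
  intro i j hij
  have : (i : ℝ) = j := by
    simpa [unitNodes, div_left_inj' (by positivity : (p : ℝ) + 1 ≠ 0)] using hij
  exact Fin.ext (by exact_mod_cast this)

theorem unitNodes_mem_Icc (p : ℕ) (j : Fin (p + 1)) : unitNodes p j ∈ Icc (0 : ℝ) 1 := by
  have hj : (j : ℝ) ≤ p := by exact_mod_cast Nat.lt_succ_iff.mp j.isLt
  refine ⟨by unfold unitNodes; positivity, ?_⟩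
  rw [unitNodes, div_le_one (by positivity)]
  linarith

def interpDerivCoeff (p : ℕ) :
    (Fin (p + 1) → ℝ) →ₗ[ℝ] (Fin (p + 1) → Fin (p + 1) → ℝ) :=
  LinearMap.pi fun k => LinearMap.pi fun m =>
    lcoeff ℝ m ∘ₗ ((derivative : ℝ[X] →ₗ[ℝ] ℝ[X]) ^ (k : ℕ)) ∘ₗ
      Lagrange.interpolate Finset.univ (unitNodes p)

def markovConst (p : ℕ) : ℝ :=
  (p + 1) * ‖LinearMap.toContinuousLinearMap (interpDerivCoeff p)‖ + 1

theorem markovConst_pos (p : ℕ) : 0 < markovConst p := by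
  unfold markovConst; positivity

/-- A polynomial of degree `≤ p` is the interpolant of its values at `unitNodes p`, so the
coefficients of its derivatives are bounded linear functions of its values on `[0, 1]`. -/
theorem abs_coeff_iterate_derivative_le {p : ℕ} {R : ℝ[X]} (hR : R.natDegree ≤ p) {M : ℝ}
    (hM : ∀ s ∈ Icc (0 : ℝ) 1, |R.eval s| ≤ M) {k m : ℕ} (hk : k ≤ p) (hm : m ≤ p) :
    |(derivative^[k] R).coeff m|
      ≤ ‖LinearMap.toContinuousLinearMap (interpDerivCoeff p)‖ * M := by
  set r : Fin (p + 1) → ℝ := fun j => R.eval (unitNodes p j)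
  have hinterp : R = Lagrange.interpolate Finset.univ (unitNodes p) r := by
    refine Lagrange.eq_interpolate (unitNodes_injective p).injOn ?_
    rw [Finset.card_univ, Fintype.card_fin]
    exact (degree_le_natDegree).trans_lt (by exact_mod_cast Nat.lt_succ_of_le hR)
  have hcoeff : (derivative^[k] R).coeff m
      = interpDerivCoeff p r ⟨k, Nat.lt_succ_of_le hk⟩ ⟨m, Nat.lt_succ_of_le hm⟩ := by
    conv_lhs => rw [hinterp]
    simp only [interpDerivCoeff, LinearMap.pi_apply, LinearMap.comp_apply, Module.End.pow_apply,
      lcoeff_apply]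
  have hr : ‖r‖ ≤ M :=
    (pi_norm_le_iff_of_nonneg ((abs_nonneg _).trans (hM 0 ⟨le_rfl, zero_le_one⟩))).2
      fun j => hM _ (unitNodes_mem_Icc p j)
  rw [hcoeff, ← Real.norm_eq_abs]
  calc _ ≤ ‖interpDerivCoeff p r‖ := (norm_le_pi_norm _ _).trans (norm_le_pi_norm _ _)
    _ = ‖LinearMap.toContinuousLinearMap (interpDerivCoeff p) r‖ := rfl
    _ ≤ _ := (ContinuousLinearMap.le_opNorm _ _).trans (by gcongr)

theorem abs_iterate_derivative_eval_le_of_unitInterval {p : ℕ} {R : ℝ[X]} (hR : R.natDegree ≤ p)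
    {M : ℝ} (hM : ∀ s ∈ Icc (0 : ℝ) 1, |R.eval s| ≤ M) {k : ℕ} (hk : k ≤ p) {t : ℝ}
    (ht : t ∈ Icc (0 : ℝ) 1) : |(derivative^[k] R).eval t| ≤ markovConst p * M := by
  have hM0 : 0 ≤ M := (abs_nonneg _).trans (hM 0 ⟨le_rfl, zero_le_one⟩)
  have hdeg : (derivative^[k] R).natDegree < p + 1 :=
    Nat.lt_succ_of_le ((natDegree_iterate_derivative R k).trans (tsub_le_self.trans hR))
  calc |(derivative^[k] R).eval t|
      ≤ ∑ m ∈ Finset.range (p + 1), |(derivative^[k] R).coeff m| :=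
        abs_eval_le_sum_abs_coeff hdeg (abs_le.2 ⟨by linarith [ht.1], ht.2⟩)
    _ ≤ ∑ _m ∈ Finset.range (p + 1),
          ‖LinearMap.toContinuousLinearMap (interpDerivCoeff p)‖ * M :=
        Finset.sum_le_sum fun m hm =>
          abs_coeff_iterate_derivative_le hR hM hk (Nat.lt_succ_iff.mp (Finset.mem_range.mp hm))
    _ ≤ markovConst p * M := by
        rw [Finset.sum_const, Finset.card_range, nsmul_eq_mul, markovConst]
        push_cast
        nlinarith

theorem pow_mul_abs_iterate_derivative_eval_le {p : ℕ} {Q : ℝ[X]} (hQ : Q.natDegree ≤ p)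
    {c d M : ℝ} (hcd : c < d) (hM : ∀ t ∈ Icc c d, |Q.eval t| ≤ M) {k : ℕ} (hk : k ≤ p) {t : ℝ}
    (ht : t ∈ Icc c d) : (d - c) ^ k * |(derivative^[k] Q).eval t| ≤ markovConst p * M := by
  have hL : 0 < d - c := sub_pos.2 hcd
  set g : ℝ[X] := C (d - c) * X + C c
  have hg : ∀ s, g.eval s = (d - c) * s + c := fun s => by simp [g]
  have hR : (Q.comp g).natDegree ≤ p := by
    rwa [natDegree_comp, natDegree_linear hL.ne', mul_one]
  have hRM : ∀ s ∈ Icc (0 : ℝ) 1, |(Q.comp g).eval s| ≤ M := fun s hs => by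
    rw [eval_comp, hg]
    exact hM _ ⟨by nlinarith [hs.1], by nlinarith [hs.2]⟩
  have hs : (t - c) / (d - c) ∈ Icc (0 : ℝ) 1 :=
    ⟨div_nonneg (by linarith [ht.1]) hL.le, (div_le_one hL).2 (by linarith [ht.2])⟩
  have hgs : g.eval ((t - c) / (d - c)) = t := by
    rw [hg]; field_simp; ring
  have := abs_iterate_derivative_eval_le_of_unitInterval hR hRM hk hs
  rwa [iterate_derivative_comp_C_mul_X_add_C, eval_mul, eval_C, eval_comp, hgs, abs_mul,
    abs_pow, abs_of_pos hL] at this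

end Polynomial

open Polynomial

theorem exists_natDegree_le_abs_sub_eval_le_taylor {p : ℕ} {u : ℝ → ℝ} {c e W : ℝ} (hce : c ≤ e)
    (hu : ContDiffOn ℝ (p + 1 : ℕ) u (Icc c e))
    (hW : ∀ y ∈ Icc c e, |iteratedDerivWithin (p + 1) u (Icc c e) y| ≤ W) :
    ∃ T : ℝ[X], T.natDegree ≤ p ∧
      ∀ t ∈ Icc c e, |u t - T.eval t| ≤ W * (t - c) ^ (p + 1) / p.factorial := by
  refine ⟨∑ j ∈ Finset.range (p + 1),
    C ((j.factorial : ℝ)⁻¹ * iteratedDerivWithin j u (Icc c e) c) * (X - C c) ^ j, ?_, ?_⟩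
  · refine natDegree_sum_le_of_forall_le _ _ fun j hj => natDegree_C_mul_le _ _ |>.trans ?_
    rw [natDegree_pow, natDegree_X_sub_C, mul_one]
    exact Nat.lt_succ_iff.mp (Finset.mem_range.mp hj)
  · intro t ht
    have := taylor_mean_remainder_bound hce (by exact_mod_cast hu) ht
      (fun y hy => (Real.norm_eq_abs _).trans_le (hW y hy))
    rw [Real.norm_eq_abs, taylor_within_apply] at this
    convert this using 4
    simp only [eval_finsetSum, eval_mul, eval_C, eval_pow, eval_sub, eval_X, smul_eq_mul]
    exact Finset.sum_congr rfl fun j _ => by ring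

theorem pow_mul_abs_iterate_derivative_eval_sub_le {p k : ℕ} (hk : k ≤ p) {u : ℝ → ℝ}
    {P T : ℝ[X]} (hP : P.natDegree ≤ p) (hT : T.natDegree ≤ p) {c d ε δ : ℝ} (hcd : c < d)
    (hPu : ∀ t ∈ Icc c d, |u t - P.eval t| ≤ ε) (hTu : ∀ t ∈ Icc c d, |u t - T.eval t| ≤ δ)
    {t : ℝ} (ht : t ∈ Icc c d) :
    (d - c) ^ k * |(derivative^[k] P).eval t - (derivative^[k] T).eval t|
      ≤ markovConst p * (ε + δ) := by
  have hQ : (P - T).natDegree ≤ p := (natDegree_sub_le _ _).trans (max_le hP hT)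
  have hQM : ∀ s ∈ Icc c d, |(P - T).eval s| ≤ ε + δ := fun s hs => by
    rw [eval_sub, abs_sub_comm]
    calc |T.eval s - P.eval s| ≤ |T.eval s - u s| + |u s - P.eval s| := abs_sub_le _ _ _
      _ ≤ ε + δ := by rw [abs_sub_comm]; linarith [hPu s hs, hTu s hs]
  simpa only [iterate_derivative_sub, eval_sub] using
    pow_mul_abs_iterate_derivative_eval_le hQ hcd hQM hk ht

theorem pow_mul_abs_jump_le {p k : ℕ} (hk : k ≤ p) {u : ℝ → ℝ} {P₀ P₁ : ℝ[X]}
    (hP₀ : P₀.natDegree ≤ p) (hP₁ : P₁.natDegree ≤ p) {c d e ℓ ε W : ℝ} (hcd : c < d)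
    (hde : d < e) (hu : ContDiffOn ℝ (p + 1 : ℕ) u (Icc c e))
    (hW : ∀ y ∈ Icc c e, |iteratedDerivWithin (p + 1) u (Icc c e) y| ≤ W)
    (h₀ : ∀ t ∈ Icc c d, |u t - P₀.eval t| ≤ ε) (h₁ : ∀ t ∈ Icc d e, |u t - P₁.eval t| ≤ ε)
    (hℓ : 0 ≤ ℓ) (hℓ₀ : ℓ ≤ d - c) (hℓ₁ : ℓ ≤ e - d) :
    ℓ ^ k * |(derivative^[k] P₁).eval d - (derivative^[k] P₀).eval d|
      ≤ 2 * markovConst p * (ε + W * (e - c) ^ (p + 1)) := by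
  have hce : c ≤ e := (hcd.trans hde).le
  obtain ⟨T, hT, hTu⟩ := exists_natDegree_le_abs_sub_eval_le_taylor hce hu hW
  have hTu' : ∀ t ∈ Icc c e, |u t - T.eval t| ≤ W * (e - c) ^ (p + 1) := fun t ht => by
    have hW0 : 0 ≤ W := (abs_nonneg _).trans (hW c ⟨le_rfl, hce⟩)
    have hct : 0 ≤ t - c := sub_nonneg.2 ht.1
    refine (hTu t ht).trans ((div_le_self (by positivity) ?_).trans ?_)
    · exact_mod_cast p.factorial_pos
    · gcongr; linarith [ht.2]
  have hJ₀ := pow_mul_abs_iterate_derivative_eval_sub_le hk hP₀ hT hcd h₀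
    (fun t ht => hTu' t ⟨ht.1, ht.2.trans hde.le⟩) (right_mem_Icc.2 hcd.le)
  have hJ₁ := pow_mul_abs_iterate_derivative_eval_sub_le hk hP₁ hT hde h₁
    (fun t ht => hTu' t ⟨hcd.le.trans ht.1, ht.2⟩) (left_mem_Icc.2 hde.le)
  set D₀ := (derivative^[k] P₀).eval d - (derivative^[k] T).eval d
  set D₁ := (derivative^[k] P₁).eval d - (derivative^[k] T).eval d
  have hℓ₀k : ℓ ^ k ≤ (d - c) ^ k := pow_le_pow_left₀ hℓ hℓ₀ k
  have hℓ₁k : ℓ ^ k ≤ (e - d) ^ k := pow_le_pow_left₀ hℓ hℓ₁ k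
  calc ℓ ^ k * |(derivative^[k] P₁).eval d - (derivative^[k] P₀).eval d|
      = ℓ ^ k * |D₁ - D₀| := by congr 2; ring
    _ ≤ ℓ ^ k * |D₁| + ℓ ^ k * |D₀| := by
        rw [← mul_add]; exact mul_le_mul_of_nonneg_left (abs_sub _ _) (by positivity)
    _ ≤ (e - d) ^ k * |D₁| + (d - c) ^ k * |D₀| := by gcongr
    _ ≤ 2 * markovConst p * (ε + W * (e - c) ^ (p + 1)) := by linarith

theorem abs_jump_le_of_quasiUniform {p k : ℕ} (hk : k ≤ p) {u : ℝ → ℝ} {P₀ P₁ : ℝ[X]}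
    (hP₀ : P₀.natDegree ≤ p) (hP₁ : P₁.natDegree ≤ p) {c d e h σ K W : ℝ} (hσ : 1 ≤ σ)
    (hcd : c < d) (hde : d < e) (hdc : d - c ≤ h) (hed : e - d ≤ h)
    (hσdc : h ≤ σ * (d - c)) (hσed : h ≤ σ * (e - d)) (hu : ContDiffOn ℝ (p + 1 : ℕ) u (Icc c e))
    (hW : ∀ y ∈ Icc c e, |iteratedDerivWithin (p + 1) u (Icc c e) y| ≤ W)
    (h₀ : ∀ t ∈ Icc c d, |u t - P₀.eval t| ≤ K * h ^ (p + 1))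
    (h₁ : ∀ t ∈ Icc d e, |u t - P₁.eval t| ≤ K * h ^ (p + 1)) :
    |(derivative^[k] P₁).eval d - (derivative^[k] P₀).eval d|
      ≤ 2 ^ (p + 2) * markovConst p * σ ^ p * (K + W) * h ^ (p + 1 - k) := by
  have hσ0 : 0 < σ := one_pos.trans_le hσ
  have hh : 0 < h := (sub_pos.2 hcd).trans_le hdc
  have hW0 : 0 ≤ W := (abs_nonneg _).trans (hW c ⟨le_rfl, (hcd.trans hde).le⟩)
  have hC := markovConst_pos p
  have hJ := pow_mul_abs_jump_le hk hP₀ hP₁ hcd hde hu hW h₀ h₁ (by positivity)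
    ((div_le_iff₀' hσ0).2 hσdc) ((div_le_iff₀' hσ0).2 hσed)
  have hce : (e - c) ^ (p + 1) ≤ 2 ^ (p + 1) * h ^ (p + 1) := by
    rw [← mul_pow]; exact pow_le_pow_left₀ (by linarith) (by linarith) _
  have hsplit : h ^ (p + 1) = h ^ k * h ^ (p + 1 - k) := by rw [← pow_add]; congr 1; omega
  set A := |(derivative^[k] P₁).eval d - (derivative^[k] P₀).eval d|
  set B := 2 ^ (p + 2) * markovConst p * (K + W) * h ^ (p + 1 - k)
  have hK0 : 0 ≤ K := (mul_nonneg_iff_of_pos_right (pow_pos hh _)).1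
    ((abs_nonneg _).trans (h₀ c (left_mem_Icc.2 hcd.le)))
  have hK : K * h ^ (p + 1) ≤ 2 ^ (p + 1) * K * h ^ (p + 1) := by
    rw [mul_assoc]; exact le_mul_of_one_le_left (by positivity) (one_le_pow₀ one_le_two)
  have hJB : (h / σ) ^ k * A ≤ h ^ k * B := calc
    _ ≤ 2 * markovConst p * (K * h ^ (p + 1) + W * (e - c) ^ (p + 1)) := hJ
    _ ≤ 2 * markovConst p * (2 ^ (p + 1) * K * h ^ (p + 1) + W * (2 ^ (p + 1) * h ^ (p + 1))) := by
        gcongr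
    _ = h ^ k * B := by rw [hsplit]; ring
  have hAB : h ^ k * A ≤ h ^ k * (σ ^ k * B) := calc
    h ^ k * A = σ ^ k * ((h / σ) ^ k * A) := by rw [div_pow]; field_simp
    _ ≤ σ ^ k * (h ^ k * B) := by gcongr
    _ = h ^ k * (σ ^ k * B) := by ring
  calc A ≤ σ ^ k * B := le_of_mul_le_mul_left hAB (pow_pos hh k)
    _ ≤ σ ^ p * B := mul_le_mul_of_nonneg_right (pow_le_pow_right₀ hσ hk) (by positivity)
    _ = 2 ^ (p + 2) * markovConst p * σ ^ p * (K + W) * h ^ (p + 1 - k) := by ring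

theorem sub_le_meshH {N j : ℕ} (x : ℕ → ℝ) (hj : j ≤ N) : x (j + 1) - x j ≤ meshH N x :=
  Finset.le_sup' (fun i => x (i + 1) - x i) (Finset.mem_range.2 (Nat.lt_succ_of_le hj))

theorem meshHmin_le_sub {N j : ℕ} (x : ℕ → ℝ) (hj : j ≤ N) : meshHmin N x ≤ x (j + 1) - x j :=
  Finset.inf'_le (fun i => x (i + 1) - x i) (Finset.mem_range.2 (Nat.lt_succ_of_le hj))

theorem Icc_subset_Icc_nodes {N : ℕ} {x : ℕ → ℝ} (hx : ∀ i ≤ N, x i < x (i + 1)) {i j : ℕ}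
    (hij : i ≤ j) (hj : j ≤ N + 1) : Icc (x i) (x j) ⊆ Icc (x 0) (x (N + 1)) := by
  have hmono : MonotoneOn x (Iic (N + 1)) :=
    (strictMonoOn_Iic_of_lt_succ fun m hm => hx m (Nat.lt_succ_iff.mp hm)).monotoneOn
  exact Icc_subset_Icc (hmono (Nat.zero_le _) (hij.trans hj) (Nat.zero_le _))
    (hmono hj (mem_Iic.2 le_rfl) hj)

theorem abs_sub_eval_le_distLinf {N j : ℕ} {x : ℕ → ℝ} {P : ℕ → ℝ[X]} {u : ℝ → ℝ} (hj : j ≤ N)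
    (hu : ContinuousOn u (Icc (x j) (x (j + 1)))) {t : ℝ} (ht : t ∈ Icc (x j) (x (j + 1))) :
    |u t - (P j).eval t| ≤ distLinf N x P u := by
  have hbdd := (isCompact_Icc.image_of_continuousOn
    (hu.sub (P j).continuous.continuousOn).abs).bddAbove
  exact (le_csSup hbdd ⟨t, ht, rfl⟩).trans <|
    Finset.le_sup' (fun i => sSup ((fun t => |u t - (P i).eval t|) '' Icc (x i) (x (i + 1))))
      (Finset.mem_range.2 (Nat.lt_succ_of_le hj))

theorem abs_iteratedDerivWithin_le_semiWinf {p : ℕ} {u : ℝ → ℝ} {a b c e : ℝ}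
    (hu : ContDiffOn ℝ (p + 1 : ℕ) u (Icc a b)) (hce : c < e) (hsub : Icc c e ⊆ Icc a b) {y : ℝ}
    (hy : y ∈ Icc c e) : |iteratedDerivWithin (p + 1) u (Icc c e) y| ≤ semiWinf p a b u := by
  have hab : a < b := (hsub (left_mem_Icc.2 hce.le)).1.trans_lt
    (hce.trans_le (hsub (right_mem_Icc.2 hce.le)).2)
  rw [iteratedDerivWithin_eq_iteratedFDerivWithin,
    iteratedFDerivWithin_subset hsub (uniqueDiffOn_Icc hce) (uniqueDiffOn_Icc hab) hu hy,
    ← iteratedDerivWithin_eq_iteratedFDerivWithin]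
  have hbdd := (isCompact_Icc.image_of_continuousOn
    (hu.continuousOn_iteratedDerivWithin le_rfl (uniqueDiffOn_Icc hab)).abs).bddAbove
  exact le_csSup hbdd ⟨y, hsub hy, rfl⟩

/-- Optimal `L^∞` convergence of order `p+1` forces the jump of the `k`-th derivative
to be of order `h^{p+1-k}` (Type A `W^{p+1}_∞` numerical smoothness is necessary). -/
theorem optimal_linf_convergence_implies_jump_smoothness (p : ℕ) (σ : ℝ) (hσ : 1 ≤ σ) :
    ∃ C : ℝ, 0 < C ∧
      ∀ (N : ℕ), 1 ≤ N → ∀ (a b : ℝ), a < b →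
      ∀ (x : ℕ → ℝ), x 0 = a → x (N + 1) = b → (∀ i ≤ N, x i < x (i + 1)) →
      meshH N x ≤ σ * meshHmin N x →
      ∀ (P : ℕ → Polynomial ℝ), (∀ i ≤ N, (P i).natDegree ≤ p) →
      ∀ (u : ℝ → ℝ), ContDiffOn ℝ (p + 1 : ℕ) u (Set.Icc a b) →
      ∀ (K : ℝ), 0 ≤ K →
      distLinf N x P u ≤ K * meshH N x ^ (p + 1) →
      ∀ i, 1 ≤ i → i ≤ N → ∀ k ≤ p,
      |jumpD P x i k| ≤ C * (K + semiWinf p a b u) * meshH N x ^ (p + 1 - k) := by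
  refine ⟨2 ^ (p + 2) * markovConst p * σ ^ p, by have := markovConst_pos p; positivity, ?_⟩
  rintro N - a b - x rfl rfl hx hquasi P hP u hu K - hdist i hi hiN k hk
  obtain ⟨j, rfl⟩ : ∃ j, i = j + 1 := ⟨i - 1, by omega⟩
  have hcell : ∀ l ≤ N, ∀ t ∈ Icc (x l) (x (l + 1)),
      |u t - (P l).eval t| ≤ K * meshH N x ^ (p + 1) := fun l hl t ht =>
    (abs_sub_eval_le_distLinf hl
      (hu.continuousOn.mono (Icc_subset_Icc_nodes hx (by omega) (by omega))) ht).trans hdist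
  have hquasi' : ∀ l ≤ N, meshH N x ≤ σ * (x (l + 1) - x l) := fun l hl =>
    hquasi.trans (mul_le_mul_of_nonneg_left (meshHmin_le_sub x hl) (by linarith))
  have hsub : Icc (x j) (x (j + 1 + 1)) ⊆ Icc (x 0) (x (N + 1)) :=
    Icc_subset_Icc_nodes hx (by omega) (by omega)
  exact abs_jump_le_of_quasiUniform hk (hP j (by omega)) (hP (j + 1) hiN) hσ (hx j (by omega))
    (hx (j + 1) hiN) (sub_le_meshH x (by omega)) (sub_le_meshH x hiN) (hquasi' j (by omega))
    (hquasi' (j + 1) hiN) (hu.mono hsub)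
    (fun y hy => abs_iteratedDerivWithin_le_semiWinf hu
      ((hx j (by omega)).trans (hx (j + 1) hiN)) hsub hy)
    (hcell j (by omega)) (hcell (j + 1) hiN)
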